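/- arXiv:2506.08742 — 10 statements merged into one kernel-verified Lean document; each statement's English description precedes it below -/
import Mathlib

section
/- Let X be a real vector space, Q ⊆ X a convex set, and F a proper face of Q. Then the set difference Q \ F is convex. -/
/-- `F` is a face of the convex set `Q`: a nonempty convex subset of `Q` such that whenever
a point `α • u + (1 - α) • v` with `u, v ∈ Q`, `0 < α < 1` lies in `F`, both `u, v ∈ F`. -/
def IsFace {X : Type*} [AddCommGroup X] [Module ℝ X] (Q F : Set X) : Prop :=
  F.Nonempty ∧ Convex ℝ F ∧ F ⊆ Q ∧
    ∀ u v : X, u ∈ Q → v ∈ Q → ∀ α : ℝ, 0 < α → α < 1 →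
      α • u + (1 - α) • v ∈ F → u ∈ F ∧ v ∈ F

theorem face_compl_convex {X : Type*} [AddCommGroup X] [Module ℝ X]
    (Q F : Set X) (hQ : Convex ℝ Q) (hF : IsFace Q F) (hFQ : F ≠ Q) :
    Convex ℝ (Q \ F) := by
  obtain ⟨-, -, hsub, hface⟩ := hF
  intro u hu v hv a b ha hb hab
  refine ⟨hQ hu.1 hv.1 ha hb hab, ?_⟩
  intro hmem
  rcases eq_or_lt_of_le ha with ha0 | ha0
  · have : b = 1 := by linarith
    simp only [← ha0, this, zero_smul, one_smul, zero_add] at hmem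
    exact hv.2 hmem
  rcases eq_or_lt_of_le hb with hb0 | hb0
  · have : a = 1 := by linarith
    simp only [← hb0, this, zero_smul, one_smul, add_zero] at hmem
    exact hu.2 hmem
  · have hb' : b = 1 - a := by linarith
    have := hface u v hu.1 hv.1 a ha0 (by linarith) (by rw [← hb']; exact hmem)
    exact hu.2 this.1
end

section
/- Let X be a real vector space, Q ⊆ X a convex set, and F a proper face of Q. Then the affine span aff F of F satisfies aff F ∩ (Q \ F) = ∅, and hence aff F ∩ Q = F. -/
open scoped Pointwise

section Convex

variable {𝕜 E : Type*} [Field 𝕜] [LinearOrder 𝕜] [IsStrictOrderedRing 𝕜] [AddCommGroup E]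
  [Module 𝕜 E] {s : Set E}

theorem Convex.exists_nonneg_smul_mem_of_mem_span_sub (hs : Convex 𝕜 s) (hne : s.Nonempty)
    {v : E} (hv : v ∈ Submodule.span 𝕜 (s - s)) : ∃ t : 𝕜, 0 ≤ t ∧ v ∈ t • (s - s) := by
  induction hv using Submodule.span_induction with
  | mem v hv => exact ⟨1, zero_le_one, by rwa [one_smul]⟩
  | zero => exact ⟨0, le_rfl, by rw [Set.zero_smul_set (hne.sub hne)]; rfl⟩
  | add v w _ _ hv hw =>
    obtain ⟨t, ht, hv⟩ := hv
    obtain ⟨r, hr, hw⟩ := hw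
    exact ⟨t + r, add_nonneg ht hr, (hs.sub hs).add_smul ht hr ▸ Set.add_mem_add hv hw⟩
  | smul c v _ hv =>
    obtain ⟨t, ht, _, ⟨a, ha, b, hb, rfl⟩, rfl⟩ := hv
    beta_reduce
    rcases le_total 0 c with hc | hc
    · refine ⟨c * t, mul_nonneg hc ht, ?_⟩
      rw [smul_smul]
      exact Set.smul_mem_smul_set (Set.sub_mem_sub ha hb)
    · refine ⟨-c * t, mul_nonneg (neg_nonneg.2 hc) ht, ⟨b - a, Set.sub_mem_sub hb ha, ?_⟩⟩
      module

theorem Convex.exists_smul_add_smul_mem_of_mem_affineSpan (hs : Convex 𝕜 s) {x : E}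
    (hx : x ∈ affineSpan 𝕜 s) :
    ∃ α : 𝕜, 0 < α ∧ α ≤ 1 ∧ ∃ n ∈ s, α • x + (1 - α) • n ∈ s := by
  obtain ⟨p, hp⟩ := (affineSpan_nonempty 𝕜).1 ⟨x, hx⟩
  have hxp : x - p ∈ Submodule.span 𝕜 (s - s) :=
    vsub_mem_vectorSpan_of_mem_affineSpan_of_mem_affineSpan hx (subset_affineSpan 𝕜 s hp)
  obtain ⟨t, ht, _, ⟨a, ha, b, hb, rfl⟩, hxpab⟩ :=
    hs.exists_nonneg_smul_mem_of_mem_span_sub ⟨p, hp⟩ hxp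
  beta_reduce at hxpab
  have hα : 0 < (1 + t)⁻¹ := inv_pos.2 (by linarith)
  have hα1 : (1 + t)⁻¹ ≤ 1 := inv_le_one_of_one_le₀ (by linarith)
  refine ⟨(1 + t)⁻¹, hα, hα1, b, hb, ?_⟩
  convert hs hp ha hα.le (sub_nonneg.2 hα1) (add_sub_cancel _ _) using 1
  rw [← sub_add_cancel x p, ← hxpab]
  match_scalars <;> field_simp <;> ring

end Convex

theorem IsFace.mem_of_mem_affineSpan {X : Type*} [AddCommGroup X] [Module ℝ X] {Q F : Set X}
    (hF : IsFace Q F) {x : X} (hx : x ∈ affineSpan ℝ F) (hxQ : x ∈ Q) : x ∈ F := by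
  obtain ⟨-, hconv, hFQ, hface⟩ := hF
  obtain ⟨α, hα, hα1, n, hn, hmem⟩ := hconv.exists_smul_add_smul_mem_of_mem_affineSpan hx
  rcases hα1.lt_or_eq with hα1 | rfl
  · exact (hface x n hxQ (hFQ hn) α hα hα1 hmem).1
  · simpa using hmem

theorem face_affineSpan_inter_general {X : Type*} [AddCommGroup X] [Module ℝ X]
    (Q F : Set X) (hF : IsFace Q F) :
    (affineSpan ℝ F : Set X) ∩ (Q \ F) = ∅ ∧ (affineSpan ℝ F : Set X) ∩ Q = F := by
  have hinter : (affineSpan ℝ F : Set X) ∩ Q = F :=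
    Set.Subset.antisymm (fun x ⟨hx, hxQ⟩ => hF.mem_of_mem_affineSpan hx hxQ)
      (Set.subset_inter (subset_affineSpan ℝ F) hF.2.2.1)
  refine ⟨?_, hinter⟩
  rw [← Set.inter_sdiff_assoc, hinter, Set.sdiff_self]

theorem face_affineSpan_inter {X : Type*} [AddCommGroup X] [Module ℝ X]
    (Q F : Set X) (hQ : Convex ℝ Q) (hF : IsFace Q F) (hFQ : F ≠ Q) :
    (affineSpan ℝ F : Set X) ∩ (Q \ F) = ∅ ∧ (affineSpan ℝ F : Set X) ∩ Q = F :=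
  face_affineSpan_inter_general Q F hF
end

section
/- Let X be a real vector space, M ⊆ X a nonempty affine subspace, S a generalized semispace generated by M, and a ∈ M. Then S = {a + t(x − a) : x ∈ S, t > 0}. -/
/-!
The union of the homothetic images of `S` with centre `a` and positive ratio is the translate by
`a` of the cone over the convex set `S - a`, hence convex; it contains `S`, and it misses `M`
because `M` is invariant under homotheties centred at `a ∈ M`. Maximality of `S` forces equality.
-/

/-- `S` is a generalized semispace generated by the set `M`: a convex set disjoint from `M`
that is maximal with respect to inclusion among convex subsets disjoint from `M`. -/
def IsGenSemispace {X : Type*} [AddCommGroup X] [Module ℝ X] (M S : Set X) : Prop :=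
  Convex ℝ S ∧ S ∩ M = ∅ ∧
    ∀ C : Set X, Convex ℝ C → C ∩ M = ∅ → S ⊆ C → C = S

open scoped Pointwise

section ConeFrom

variable {𝕜 E : Type*} [Field 𝕜] [LinearOrder 𝕜] [IsStrictOrderedRing 𝕜]
  [AddCommGroup E] [Module 𝕜 E]

variable (𝕜) in
def coneFrom (a : E) (S : Set E) : Set E :=
  {z | ∃ x ∈ S, ∃ t : 𝕜, 0 < t ∧ z = a + t • (x - a)}

lemma subset_coneFrom (a : E) (S : Set E) : S ⊆ coneFrom 𝕜 a S :=
  fun x hx => ⟨x, hx, 1, one_pos, by simp⟩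

lemma Convex.coneFrom_eq_vadd_hull {S : Set E} (hS : Convex 𝕜 S) (a : E) :
    coneFrom 𝕜 a S = a +ᵥ (ConvexCone.hull 𝕜 (-a +ᵥ S) : Set E) := by
  ext z
  simp only [coneFrom, Set.mem_ofPred_eq, Set.mem_vadd_set_iff_neg_vadd_mem,
    SetLike.mem_coe, ConvexCone.mem_hull_of_convex (hS.vadd (-a)), Set.mem_smul_set,
    neg_neg, vadd_eq_add]
  constructor
  · rintro ⟨x, hx, t, ht, rfl⟩
    exact ⟨t, ht, x - a, by rwa [add_sub_cancel], by abel⟩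
  · rintro ⟨t, ht, y, hy, hty⟩
    exact ⟨a + y, hy, t, ht, by rw [add_sub_cancel_left, hty, add_neg_cancel_left]⟩

lemma Convex.convex_coneFrom {S : Set E} (hS : Convex 𝕜 S) (a : E) :
    Convex 𝕜 (coneFrom 𝕜 a S) := by
  rw [hS.coneFrom_eq_vadd_hull]
  exact (ConvexCone.hull 𝕜 _).convex.vadd a

omit [IsStrictOrderedRing 𝕜] in
lemma AffineSubspace.coneFrom_inter_eq_empty {M : AffineSubspace 𝕜 E} {S : Set E}
    (hSM : S ∩ M = ∅) {a : E} (ha : a ∈ M) : coneFrom 𝕜 a S ∩ M = ∅ := by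
  refine Set.eq_empty_of_forall_notMem fun z ⟨⟨x, hx, t, ht, hz⟩, hzM⟩ => ?_
  have htxa : t • (x - a) ∈ M.direction := by
    rwa [← vadd_mem_iff_mem_direction _ ha, vadd_eq_add, add_comm, ← hz]
  rw [Submodule.smul_mem_iff _ ht.ne'] at htxa
  have hxM : x ∈ M := by simpa using AffineSubspace.vadd_mem_of_mem_direction htxa ha
  exact hSM.subset ⟨hx, hxM⟩

end ConeFrom

theorem genSemispace_eq_cone_from_point_general {X : Type*} [AddCommGroup X] [Module ℝ X]
    (M : AffineSubspace ℝ X)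
    (S : Set X) (hS : IsGenSemispace (M : Set X) S)
    (a : X) (ha : a ∈ M) :
    S = {z : X | ∃ x ∈ S, ∃ t : ℝ, 0 < t ∧ z = a + t • (x - a)} := by
  obtain ⟨hconv, hdisj, hmax⟩ := hS
  exact (hmax (coneFrom ℝ a S) (hconv.convex_coneFrom a)
    (M.coneFrom_inter_eq_empty hdisj ha) (subset_coneFrom a S)).symm

theorem genSemispace_eq_cone_from_point {X : Type*} [AddCommGroup X] [Module ℝ X]
    (M : AffineSubspace ℝ X) (hM : (M : Set X).Nonempty)
    (S : Set X) (hS : IsGenSemispace (M : Set X) S)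
    (a : X) (ha : a ∈ M) :
    S = {z : X | ∃ x ∈ S, ∃ t : ℝ, 0 < t ∧ z = a + t • (x - a)} :=
  genSemispace_eq_cone_from_point_general M S hS a ha
end

section
/- Let X be a real vector space, M ⊆ X a nonempty affine subspace, and S a generalized semispace generated by M. Then for every a ∈ M the set {a} ∪ S is convex, and consequently the set M ∪ S is convex. -/
/-!
Let `a ∈ M`, `s ∈ S` and let `z` lie on the segment from `a` to `s`, `z ≠ a`. The convex join of
`z` with `S` still misses `M`: a point `m` of it is `(1 - d) • a + d • w` with `d > 0` and `w` on a
segment between two points of `S`, so `m ∈ M` would force `w = a + d⁻¹ • (m - a) ∈ M`. By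
maximality this join is `S`, hence `S` contains the open segment from any point of `M` to any
point of `S`, which is the convexity of `{a} ∪ S`; that of `M ∪ S` then follows segment by segment.
-/

open AffineMap Set

theorem AffineSubspace.mem_of_lineMap_mem {k V P : Type*} [DivisionRing k] [AddCommGroup V]
    [Module k V] [AddTorsor V P] {s : AffineSubspace k P} {a w : P} {d : k} (hd : d ≠ 0)
    (ha : a ∈ s) (h : lineMap a w d ∈ s) : w ∈ s := by
  simpa [hd] using AffineMap.lineMap_mem d⁻¹ ha h

theorem lineMap_lineMap_eq_lineMap_lineMap {𝕜 E : Type*} [Field 𝕜] [AddCommGroup E]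
    [Module 𝕜 E] (a c c' : E) {r u : 𝕜} (hd : 1 - (1 - u) * (1 - r) ≠ 0) :
    lineMap (lineMap a c r) c' u =
      lineMap a (lineMap c c' (u / (1 - (1 - u) * (1 - r)))) (1 - (1 - u) * (1 - r)) := by
  simp only [lineMap_apply_module]
  match_scalars <;> field_simp <;> ring

section

variable {𝕜 E : Type*} [Field 𝕜] [LinearOrder 𝕜] [IsStrictOrderedRing 𝕜]
  [AddCommGroup E] [Module 𝕜 E]

theorem Convex.convexJoin_lineMap_inter_eq_empty {M : AffineSubspace 𝕜 E} {C : Set E}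
    (hC : Convex 𝕜 C) (hCM : C ∩ M = ∅) {a c : E} (ha : a ∈ M) (hc : c ∈ C) {r : 𝕜}
    (hr : r ∈ Ioc 0 1) : convexJoin 𝕜 {lineMap a c r} C ∩ M = ∅ := by
  refine eq_empty_of_forall_notMem fun m ⟨hmJ, hmM⟩ => ?_
  rw [convexJoin_singleton_left, mem_iUnion₂] at hmJ
  obtain ⟨c', hc', hm⟩ := hmJ
  rw [segment_eq_image_lineMap, mem_image] at hm
  obtain ⟨u, ⟨hu0, hu1⟩, rfl⟩ := hm
  set d := 1 - (1 - u) * (1 - r)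
  have hd : 0 < d := by nlinarith [mul_nonneg hu0 (sub_nonneg.2 hr.2), hr.1]
  have hud : u / d ∈ Icc 0 1 :=
    ⟨div_nonneg hu0 hd.le, div_le_one_of_le₀ (by nlinarith [hr.1]) hd.le⟩
  have hwC : lineMap c c' (u / d) ∈ C := hC.lineMap_mem hc hc' hud
  have hwM : lineMap c c' (u / d) ∈ M := by
    refine M.mem_of_lineMap_mem hd.ne' ha ?_
    rwa [← lineMap_lineMap_eq_lineMap_lineMap a c c' hd.ne']
  exact eq_empty_iff_forall_notMem.1 hCM _ ⟨hwC, hwM⟩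

end

section

variable {𝕜 E : Type*} [Semiring 𝕜] [PartialOrder 𝕜] [AddCommMonoid E] [Module 𝕜 E]

theorem Convex.insert_of_openSegment_subset [IsOrderedRing 𝕜] {s : Set E} (hs : Convex 𝕜 s)
    {a : E} (h : ∀ x ∈ s, openSegment 𝕜 a x ⊆ s) : Convex 𝕜 (insert a s) := by
  have hseg : ∀ x ∈ s, segment 𝕜 a x ⊆ insert a s := fun x hx => by
    rw [← insert_endpoints_openSegment]
    exact insert_subset_insert (insert_subset_iff.2 ⟨hx, h x hx⟩)
  rw [convex_iff_segment_subset]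
  rintro x (rfl | hx) y (rfl | hy)
  · rw [segment_same]; exact singleton_subset_iff.2 (mem_insert _ s)
  · exact hseg y hy
  · rw [segment_symm]; exact hseg x hx
  · exact (hs.segment_subset hx hy).trans (subset_insert _ _)

theorem Convex.union_of_forall_convex_insert {s t : Set E} (hs : Convex 𝕜 s) (ht : Convex 𝕜 t)
    (h : ∀ a ∈ s, Convex 𝕜 (insert a t)) : Convex 𝕜 (s ∪ t) := by
  have hseg : ∀ x ∈ s, ∀ y ∈ t, segment 𝕜 x y ⊆ s ∪ t := fun x hx y hy =>
    ((h x hx).segment_subset (mem_insert x t) (mem_insert_of_mem x hy)).trans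
      (insert_subset_iff.2 ⟨Or.inl hx, subset_union_right⟩)
  rw [convex_iff_segment_subset]
  rintro x (hx | hx) y (hy | hy)
  · exact (hs.segment_subset hx hy).trans subset_union_left
  · exact hseg x hx y hy
  · rw [segment_symm]; exact hseg y hy x hx
  · exact (ht.segment_subset hx hy).trans subset_union_right

end

theorem IsGenSemispace.openSegment_subset {X : Type*} [AddCommGroup X] [Module ℝ X]
    {M : AffineSubspace ℝ X} {S : Set X} (hS : IsGenSemispace (M : Set X) S) {a s : X}
    (ha : a ∈ M) (hs : s ∈ S) : openSegment ℝ a s ⊆ S := by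
  obtain ⟨hconv, hdisj, hmax⟩ := hS
  rw [openSegment_eq_image_lineMap]
  rintro _ ⟨r, hr, rfl⟩
  have hJ := hmax _ ((convex_singleton _).convexJoin hconv)
    (hconv.convexJoin_lineMap_inter_eq_empty hdisj ha hs (Ioo_subset_Ioc_self hr))
    (subset_convexJoin_right (singleton_nonempty _))
  exact hJ ▸ subset_convexJoin_left ⟨s, hs⟩ rfl

theorem genSemispace_union_convex_general {X : Type*} [AddCommGroup X] [Module ℝ X]
    (M : AffineSubspace ℝ X)
    (S : Set X) (hS : IsGenSemispace (M : Set X) S) :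
    (∀ a ∈ (M : Set X), Convex ℝ ({a} ∪ S)) ∧ Convex ℝ ((M : Set X) ∪ S) := by
  have hinsert : ∀ a ∈ (M : Set X), Convex ℝ (insert a S) := fun a ha =>
    hS.1.insert_of_openSegment_subset fun _ hs => hS.openSegment_subset ha hs
  exact ⟨fun a ha => singleton_union ▸ hinsert a ha,
    M.convex.union_of_forall_convex_insert hS.1 hinsert⟩

theorem genSemispace_union_convex {X : Type*} [AddCommGroup X] [Module ℝ X]
    (M : AffineSubspace ℝ X) (hM : (M : Set X).Nonempty)
    (S : Set X) (hS : IsGenSemispace (M : Set X) S) :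
    (∀ a ∈ (M : Set X), Convex ℝ ({a} ∪ S)) ∧ Convex ℝ ((M : Set X) ∪ S) :=
  genSemispace_union_convex_general M S hS
end

section
/- Let X be a real vector space, M ⊆ X a nonempty affine subspace, S a generalized semispace generated by M, a ∈ M, and S⁻ := {2a − y : y ∈ S}. Then S⁻ is also a generalized semispace generated by M, and X is the union X = S⁻ ∪ M ∪ S with the three sets S⁻, M, S pairwise disjoint. -/
open Set AffineEquiv

theorem AffineSubspace.pointReflection_mem {k V P : Type*} [Ring k] [AddCommGroup V]
    [Module k V] [AddTorsor V P] {M : AffineSubspace k P} {a y : P} (ha : a ∈ M) (hy : y ∈ M) :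
    pointReflection k a y ∈ M :=
  M.vadd_mem_of_mem_direction (M.vsub_mem_direction ha hy) ha

theorem AffineSubspace.image_pointReflection {k V P : Type*} [Ring k] [AddCommGroup V]
    [Module k V] [AddTorsor V P] {M : AffineSubspace k P} {a : P} (ha : a ∈ M) :
    pointReflection k a '' M = M := by
  refine (image_subset_iff.2 fun y hy => M.pointReflection_mem ha hy).antisymm fun y hy => ?_
  exact ⟨pointReflection k a y, M.pointReflection_mem ha hy, pointReflection_involutive k a y⟩

section

variable {X : Type*} [AddCommGroup X] [Module ℝ X]

theorem Convex.image_pointReflection_inter_eq_empty {S : Set X} (hS : Convex ℝ S) {a : X}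
    (ha : a ∉ S) : pointReflection ℝ a '' S ∩ S = ∅ := by
  refine eq_empty_iff_forall_notMem.2 ?_
  rintro _ ⟨⟨y, hy, rfl⟩, hy'⟩
  exact ha (AffineEquiv.midpoint_pointReflection_right (R := ℝ) a y ▸ hS.midpoint_mem hy hy')

theorem Convex.inter_affineSubspace_nonempty_of_smul_add_smul_mem_direction {S : Set X}
    (hS : Convex ℝ S) {M : AffineSubspace ℝ X} {a s s' : X} {t t' : ℝ} (ha : a ∈ M)
    (hs : s ∈ S) (hs' : s' ∈ S) (ht : 0 < t) (ht' : 0 < t')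
    (hdir : t • (s - a) + t' • (s' - a) ∈ M.direction) : (S ∩ (M : Set X)).Nonempty := by
  have htt' : t + t' ≠ 0 := by positivity
  refine ⟨(t / (t + t')) • s + (t' / (t + t')) • s', hS hs hs' (by positivity) (by positivity)
    (by field_simp), ?_⟩
  have hq : (t / (t + t')) • s + (t' / (t + t')) • s'
      = (t + t')⁻¹ • (t • (s - a) + t' • (s' - a)) +ᵥ a := by
    rw [vadd_eq_add]
    match_scalars <;> field_simp
    ring
  rw [hq]
  exact M.vadd_mem_of_mem_direction (M.direction.smul_mem _ hdir) ha

namespace IsGenSemispace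

theorem image_affineEquiv {Y : Type*} [AddCommGroup Y] [Module ℝ Y] {M S : Set X}
    (h : IsGenSemispace M S) (e : X ≃ᵃ[ℝ] Y) : IsGenSemispace (e '' M) (e '' S) := by
  obtain ⟨hconv, hdisj, hmax⟩ := h
  refine ⟨hconv.affine_image e.toAffineMap, by rw [← image_inter e.injective, hdisj, image_empty],
    fun C hC hCM hSC => ?_⟩
  have hpre : e ⁻¹' C = S := by
    refine hmax _ (hC.affine_preimage e.toAffineMap) ?_ (image_subset_iff.1 hSC)
    refine eq_empty_iff_forall_notMem.2 fun x ⟨hxC, hxM⟩ => ?_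
    exact (eq_empty_iff_forall_notMem.1 hCM) (e x) ⟨hxC, mem_image_of_mem e hxM⟩
  rw [← hpre, image_preimage_eq C e.surjective]

variable {M S : Set X}

theorem nonempty_of_notMem (h : IsGenSemispace M S) {p : X} (hp : p ∉ M) : S.Nonempty := by
  refine nonempty_iff_ne_empty.2 fun hS => ?_
  have hsingleton := h.2.2 {p} (convex_singleton p)
    (singleton_inter_eq_empty.2 hp) (hS ▸ empty_subset _)
  exact singleton_ne_empty p (hsingleton.trans hS)

theorem exists_openSegment_mem (h : IsGenSemispace M S) {p : X} (hpM : p ∉ M) (hpS : p ∉ S) :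
    ∃ s ∈ S, ∃ m ∈ M, m ∈ openSegment ℝ p s := by
  have hSne := h.nonempty_of_notMem hpM
  obtain ⟨hconv, hdisj, hmax⟩ := h
  have hp : p ∈ convexHull ℝ (insert p S) := subset_convexHull ℝ _ (mem_insert p S)
  have hmeet : (convexHull ℝ (insert p S) ∩ M).Nonempty := by
    refine nonempty_iff_ne_empty.2 fun hempty => hpS ?_
    rwa [hmax _ (convex_convexHull ℝ _) hempty
      ((subset_insert p S).trans (subset_convexHull ℝ _))] at hp
  obtain ⟨m, hmC, hmM⟩ := hmeet
  rw [convexHull_insert hSne, hconv.convexHull_eq, mem_convexJoin] at hmC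
  obtain ⟨_, rfl, s, hs, hm⟩ := hmC
  have hsM : s ∉ M := fun hsM => (eq_empty_iff_forall_notMem.1 hdisj) s ⟨hs, hsM⟩
  exact ⟨s, hs, m, hmM, mem_openSegment_of_ne_left_right (fun h => hpM (h ▸ hmM))
    (fun h => hsM (h ▸ hmM)) hm⟩

variable {M : AffineSubspace ℝ X} {S : Set X}

theorem exists_add_smul_mem_direction (h : IsGenSemispace M S) {a p : X} (ha : a ∈ M)
    (hpM : p ∉ M) (hpS : p ∉ S) : ∃ s ∈ S, ∃ t : ℝ, 0 < t ∧ p - a + t • (s - a) ∈ M.direction := by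
  obtain ⟨s, hs, m, hmM, u, v, hu, hv, huv, rfl⟩ := h.exists_openSegment_mem hpM hpS
  refine ⟨s, hs, v / u, div_pos hv hu, ?_⟩
  obtain rfl : v = 1 - u := by linarith
  have hcomb : p - a + ((1 - u) / u) • (s - a) = u⁻¹ • (u • p + (1 - u) • s -ᵥ a) := by
    rw [vsub_eq_sub]
    match_scalars <;> field_simp
    ring
  rw [hcomb]
  exact M.direction.smul_mem _ (M.vsub_mem_direction hmM ha)

theorem mem_or_mem_or_pointReflection_mem (h : IsGenSemispace M S) {a : X} (ha : a ∈ M)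
    (x : X) : x ∈ M ∨ x ∈ S ∨ pointReflection ℝ a x ∈ S := by
  by_contra! hx
  obtain ⟨hxM, hxS, hx'S⟩ := hx
  have hx'M : pointReflection ℝ a x ∉ M := fun hx'M =>
    hxM (pointReflection_involutive ℝ a x ▸ M.pointReflection_mem ha hx'M)
  obtain ⟨s, hs, t, ht, hdir⟩ := h.exists_add_smul_mem_direction ha hxM hxS
  obtain ⟨s', hs', t', ht', hdir'⟩ := h.exists_add_smul_mem_direction ha hx'M hx'S
  have hsum : t • (s - a) + t' • (s' - a) ∈ M.direction := by
    have := M.direction.add_mem hdir hdir'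
    rwa [pointReflection_apply, vsub_eq_sub, vadd_eq_add,
      show x - a + t • (s - a) + (a - x + a - a + t' • (s' - a)) = t • (s - a) + t' • (s' - a)
        by abel] at this
  obtain ⟨q, hqS, hqM⟩ :=
    h.1.inter_affineSubspace_nonempty_of_smul_add_smul_mem_direction ha hs hs' ht ht' hsum
  exact (eq_empty_iff_forall_notMem.1 h.2.1) q ⟨hqS, hqM⟩

end IsGenSemispace

end

theorem genSemispace_reflection_general {X : Type*} [AddCommGroup X] [Module ℝ X]
    (M : AffineSubspace ℝ X)
    (S : Set X) (hS : IsGenSemispace (M : Set X) S)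
    (a : X) (ha : a ∈ M)
    (Sneg : Set X) (hSneg : Sneg = {z : X | ∃ y ∈ S, z = (2 : ℝ) • a - y}) :
    IsGenSemispace (M : Set X) Sneg ∧
      Sneg ∪ (M : Set X) ∪ S = Set.univ ∧
      Sneg ∩ (M : Set X) = ∅ ∧ Sneg ∩ S = ∅ ∧ (M : Set X) ∩ S = ∅ := by
  have hreflect : Sneg = pointReflection ℝ a '' S := by
    subst hSneg
    ext z
    simp only [mem_ofPred_eq, mem_image, pointReflection_apply, vsub_eq_sub, vadd_eq_add]
    refine exists_congr fun y => and_congr_right fun _ => ?_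
    rw [eq_comm, two_smul, sub_add_eq_add_sub, add_comm]
  have hSneg_semi : IsGenSemispace (M : Set X) Sneg := by
    simpa only [hreflect, M.image_pointReflection ha] using
      hS.image_affineEquiv (pointReflection ℝ a)
  have haS : a ∉ S := fun haS => (eq_empty_iff_forall_notMem.1 hS.2.1) a ⟨haS, ha⟩
  refine ⟨hSneg_semi, eq_univ_of_forall fun x => ?_, hSneg_semi.2.1,
    hreflect ▸ hS.1.image_pointReflection_inter_eq_empty haS, inter_comm S M ▸ hS.2.1⟩
  rcases hS.mem_or_mem_or_pointReflection_mem ha x with hxM | hxS | hx'S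
  · exact Or.inl (Or.inr hxM)
  · exact Or.inr hxS
  · exact Or.inl (Or.inl (hreflect ▸ ⟨_, hx'S, pointReflection_involutive ℝ a x⟩))

theorem genSemispace_reflection {X : Type*} [AddCommGroup X] [Module ℝ X]
    (M : AffineSubspace ℝ X) (hM : (M : Set X).Nonempty)
    (S : Set X) (hS : IsGenSemispace (M : Set X) S)
    (a : X) (ha : a ∈ M)
    (Sneg : Set X) (hSneg : Sneg = {z : X | ∃ y ∈ S, z = (2 : ℝ) • a - y}) :
    IsGenSemispace (M : Set X) Sneg ∧
      Sneg ∪ (M : Set X) ∪ S = Set.univ ∧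
      Sneg ∩ (M : Set X) = ∅ ∧ Sneg ∩ S = ∅ ∧ (M : Set X) ∩ S = ∅ :=
  genSemispace_reflection_general M S hS a ha Sneg hSneg
end

section
/- Let X be a real vector space, M ⊆ X a nonempty affine subspace with M ≠ X, and S a generalized semispace generated by M. Then the complement X \ S is convex, so that S is a halfspace in X; consequently the set M ∪ S is also a halfspace in X. -/
/-- A halfspace in `X` is a convex set whose complement is also convex. -/
def IsHalfspace {X : Type*} [AddCommGroup X] [Module ℝ X] (H : Set X) : Prop :=
  Convex ℝ H ∧ Convex ℝ Hᶜ

section Aux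

variable {X : Type*} [AddCommGroup X] [Module ℝ X]

lemma affine_comb2_mem (M : AffineSubspace ℝ X) {m n : X} (hm : m ∈ M) (hn : n ∈ M)
    {c d : ℝ} (h : c + d = 1) : c • m + d • n ∈ M := by
  have h1 : (c • m + d • n) - n ∈ M.direction := by
    have he : c • m + d • n - n = c • (m - n) := by
      have hd : d = 1 - c := by linarith
      subst hd; module
    rw [he]
    exact M.direction.smul_mem c (AffineSubspace.vsub_mem_direction hm hn)
  have h2 := AffineSubspace.vadd_mem_of_mem_direction h1 hn
  simpa [vadd_eq_add, sub_add_cancel] using h2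

lemma affine_comb3_mem (M : AffineSubspace ℝ X) {m n p : X} (hm : m ∈ M) (hn : n ∈ M)
    (hp : p ∈ M) {a b c : ℝ} (h : a + b + c = 1) : a • m + b • n + c • p ∈ M := by
  have h1 : (a • m + b • n + c • p) - p ∈ M.direction := by
    have he : a • m + b • n + c • p - p = a • (m - p) + b • (n - p) := by
      have hc : c = 1 - a - b := by linarith
      subst hc; module
    rw [he]
    exact Submodule.add_mem _
      (M.direction.smul_mem a (AffineSubspace.vsub_mem_direction hm hp))
      (M.direction.smul_mem b (AffineSubspace.vsub_mem_direction hn hp))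
  have h2 := AffineSubspace.vadd_mem_of_mem_direction h1 hp
  simpa [vadd_eq_add, sub_add_cancel] using h2

lemma convex_comb3_mem {S : Set X} (hS : Convex ℝ S) {x y z : X} (hx : x ∈ S) (hy : y ∈ S)
    (hz : z ∈ S) {a b c : ℝ} (ha : 0 ≤ a) (hb : 0 ≤ b) (hc : 0 ≤ c) (h : a + b + c = 1) :
    a • x + b • y + c • z ∈ S := by
  rcases eq_or_lt_of_le (by positivity : (0:ℝ) ≤ b + c) with h0 | h0
  · have hb0 : b = 0 := by linarith
    have hc0 : c = 0 := by linarith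
    have ha1 : a = 1 := by linarith
    simpa [hb0, hc0, ha1] using hx
  · have hw : (b/(b+c)) • y + (c/(b+c)) • z ∈ S :=
      hS hy hz (by positivity) (by positivity) (by field_simp)
    have h2 := hS hx hw ha (le_of_lt h0) (by linarith)
    have hbc : b + c ≠ 0 := ne_of_gt h0
    have he : a • x + (b+c) • ((b/(b+c)) • y + (c/(b+c)) • z) = a • x + b • y + c • z := by
      have e1 : (b+c) * (b/(b+c)) = b := by field_simp
      have e2 : (b+c) * (c/(b+c)) = c := by field_simp
      rw [smul_add, smul_smul, smul_smul, e1, e2]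
      exact (add_assoc _ _ _).symm
    rwa [he] at h2

end Aux

set_option maxHeartbeats 1000000 in
theorem genSemispace_isHalfspace {X : Type*} [AddCommGroup X] [Module ℝ X]
    (M : AffineSubspace ℝ X) (hM : (M : Set X).Nonempty) (hMX : (M : Set X) ≠ Set.univ)
    (S : Set X) (hS : IsGenSemispace (M : Set X) S) :
    Convex ℝ Sᶜ ∧ IsHalfspace S ∧ IsHalfspace ((M : Set X) ∪ S) := by
  obtain ⟨hconv, hdisj, hmax⟩ := hS
  have hdisj' : ∀ x, x ∈ S → x ∈ (M : Set X) → False := by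
    intro x h1 h2
    exact Set.eq_empty_iff_forall_notMem.mp hdisj x ⟨h1, h2⟩
  obtain ⟨v, hv⟩ : ∃ v, v ∉ (M : Set X) := by
    by_contra h
    push_neg at h
    exact hMX (Set.eq_univ_of_forall h)
  have hSne : S.Nonempty := by
    rcases S.eq_empty_or_nonempty with h | h
    · exfalso
      have h1 : ({v} : Set X) ∩ (M : Set X) = ∅ := Set.singleton_inter_eq_empty.mpr hv
      have h2 := hmax {v} (convex_singleton v) h1 (h ▸ Set.empty_subset _)
      rw [h] at h2
      exact Set.singleton_ne_empty v h2
    · exact h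
  -- key representation lemma
  have key : ∀ x, x ∉ S → ∃ m ∈ (M : Set X), ∃ s ∈ S, ∃ p q : ℝ,
      0 < p ∧ 0 ≤ q ∧ p + q = 1 ∧ m = p • x + q • s := by
    intro x hx
    have hsub : S ⊆ convexHull ℝ (insert x S) :=
      (Set.subset_insert x S).trans (subset_convexHull ℝ _)
    have hne : convexHull ℝ (insert x S) ∩ (M : Set X) ≠ ∅ := by
      intro h
      have heq := hmax _ (convex_convexHull ℝ _) h hsub
      exact hx (heq ▸ subset_convexHull ℝ _ (Set.mem_insert x S))
    obtain ⟨m, hmC, hmM⟩ := Set.nonempty_iff_ne_empty.mpr hne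
    rw [convexHull_insert hSne, hconv.convexHull_eq, mem_convexJoin] at hmC
    obtain ⟨x', hx', s, hsS, hseg⟩ := hmC
    rw [Set.mem_singleton_iff] at hx'
    subst hx'
    obtain ⟨p, q, hp, hq, hpq, hm⟩ := hseg
    rcases eq_or_lt_of_le hp with h0 | h0
    · exfalso
      have hq1 : q = 1 := by linarith
      have hms : m = s := by rw [← hm, ← h0, hq1]; simp
      exact hdisj' m (hms ▸ hsS) hmM
    · exact ⟨m, hmM, s, hsS, p, q, h0, hq, hpq, hm.symm⟩
  -- convexity of the complement of S
  have hcompl : Convex ℝ Sᶜ := by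
    intro x hx y hy a b ha hb hab
    rcases eq_or_lt_of_le ha with ha0 | ha0
    · have hb1 : b = 1 := by linarith
      simpa [← ha0, hb1] using hy
    rcases eq_or_lt_of_le hb with hb0 | hb0
    · have ha1 : a = 1 := by linarith
      simpa [← hb0, ha1] using hx
    intro hz
    obtain ⟨m₁, hm₁M, s₁, hs₁, p, q, hp, hq, hpq, hm₁⟩ := key x hx
    obtain ⟨m₂, hm₂M, s₂, hs₂, r, w, hr, hw, hrw, hm₂⟩ := key y hy
    have hp1 : p ≤ 1 := by linarith
    have hr1 : r ≤ 1 := by linarith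
    set lam := a / p + b / r with hlam
    have h1 : a ≤ a / p := by rw [le_div_iff₀ hp]; nlinarith
    have h2 : b ≤ b / r := by rw [le_div_iff₀ hr]; nlinarith
    have hlam1 : 1 ≤ lam := by rw [hlam]; linarith
    have hlampos : 0 < lam := by linarith
    have hp' : p ≠ 0 := ne_of_gt hp
    have hr' : r ≠ 0 := ne_of_gt hr
    have hlam' : lam ≠ 0 := ne_of_gt hlampos
    have hMmem : (a/(p*lam)) • m₁ + (b/(r*lam)) • m₂ ∈ (M : Set X) := by
      apply affine_comb2_mem M hm₁M hm₂M
      rw [hlam]; field_simp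
    have hSmem : (a/(p*lam)) • m₁ + (b/(r*lam)) • m₂ ∈ S := by
      have heq : (a/(p*lam)) • m₁ + (b/(r*lam)) • m₂ =
          (1/lam) • (a • x + b • y) + (a*q/(p*lam)) • s₁ + (b*w/(r*lam)) • s₂ := by
        rw [hm₁, hm₂]
        match_scalars <;> field_simp <;> ring
      rw [heq]
      apply convex_comb3_mem hconv hz hs₁ hs₂ (by positivity) (by positivity) (by positivity)
      have hq' : q = 1 - p := by linarith
      have hw' : w = 1 - r := by linarith
      have hb2 : b = 1 - a := by linarith
      have e : 1/lam + a*q/(p*lam) + b*w/(r*lam) = (1 + a*q/p + b*w/r)/lam := by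
        field_simp
      have hkey : 1 + a*q/p + b*w/r = lam := by
        rw [hq', hw', hlam, hb2]
        field_simp
        ring
      rw [e, hkey, div_self hlam']
    exact hdisj' _ hSmem hMmem
  -- convexity of M ∪ S
  have hMS : ∀ x ∈ (M : Set X), ∀ y ∈ S, ∀ a b : ℝ, 0 ≤ a → 0 < b → a + b = 1 →
      a • x + b • y ∈ (M : Set X) ∪ S := by
    intro x hx y hy a b ha hb hab
    by_contra hcon
    rw [Set.mem_union] at hcon
    push_neg at hcon
    obtain ⟨hzM, hzS⟩ := hcon
    obtain ⟨m, hmM, s, hsS, p, q, hp, hq, hpq, hm⟩ := key _ hzS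
    have ha1 : a < 1 := by linarith
    have hp1 : p ≤ 1 := by linarith
    have hpa : p * a < 1 := by nlinarith
    have hpa' : (0:ℝ) < 1 - p * a := by linarith
    have hMm : (1/(1-p*a)) • m + (-(p*a)/(1-p*a)) • x ∈ (M : Set X) := by
      apply affine_comb2_mem M hmM hx
      field_simp
      ring
    have hSm : (1/(1-p*a)) • m + (-(p*a)/(1-p*a)) • x ∈ S := by
      have heq : (1/(1-p*a)) • m + (-(p*a)/(1-p*a)) • x =
          (p*b/(1-p*a)) • y + (q/(1-p*a)) • s := by
        rw [hm]
        match_scalars <;> field_simp <;> ring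
      rw [heq]
      apply hconv hy hsS (by positivity) (by positivity)
      have hq' : q = 1 - p := by linarith
      have hb' : b = 1 - a := by linarith
      rw [hq', hb']
      field_simp
      ring
    exact hdisj' _ hSm hMm
  have hunion : Convex ℝ ((M : Set X) ∪ S) := by
    intro x hx y hy a b ha hb hab
    rcases eq_or_lt_of_le ha with ha0 | ha0
    · have hb1 : b = 1 := by linarith
      simpa [← ha0, hb1] using hy
    rcases eq_or_lt_of_le hb with hb0 | hb0
    · have ha1 : a = 1 := by linarith
      simpa [← hb0, ha1] using hx
    rcases hx with hxM | hxS <;> rcases hy with hyM | hyS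
    · exact Or.inl (M.convex hxM hyM ha hb hab)
    · exact hMS x hxM y hyS a b ha hb0 hab
    · have := hMS y hyM x hxS b a hb ha0 (by linarith)
      rwa [add_comm] at this
    · exact Or.inr (hconv hxS hyS ha hb hab)
  -- convexity of the complement of M ∪ S
  have huc : Convex ℝ ((M : Set X) ∪ S)ᶜ := by
    intro x hx y hy a b ha hb hab
    rw [Set.mem_compl_iff, Set.mem_union] at hx hy
    push_neg at hx hy
    obtain ⟨hxM, hxS⟩ := hx
    obtain ⟨hyM, hyS⟩ := hy
    rcases eq_or_lt_of_le ha with ha0 | ha0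
    · have hb1 : b = 1 := by linarith
      simp only [← ha0, hb1, zero_smul, one_smul, zero_add, Set.mem_compl_iff, Set.mem_union]
      push_neg
      exact ⟨hyM, hyS⟩
    rcases eq_or_lt_of_le hb with hb0 | hb0
    · have ha1 : a = 1 := by linarith
      simp only [← hb0, ha1, zero_smul, one_smul, add_zero, Set.mem_compl_iff, Set.mem_union]
      push_neg
      exact ⟨hxM, hxS⟩
    have hzS : a • x + b • y ∉ S := hcompl hxS hyS ha hb hab
    rw [Set.mem_compl_iff, Set.mem_union]
    push_neg
    refine ⟨?_, hzS⟩
    intro hzM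
    obtain ⟨m₁, hm₁M, s₁, hs₁, p, q, hp, hq, hpq, hm₁⟩ := key x hxS
    obtain ⟨m₂, hm₂M, s₂, hs₂, r, w, hr, hw, hrw, hm₂⟩ := key y hyS
    have hp1 : p ≤ 1 := by linarith
    have hr1 : r ≤ 1 := by linarith
    set lam := a / p + b / r with hlam
    have h1 : a ≤ a / p := by rw [le_div_iff₀ hp]; nlinarith
    have h2 : b ≤ b / r := by rw [le_div_iff₀ hr]; nlinarith
    have hlam1 : 1 ≤ lam := by rw [hlam]; linarith
    have hp' : p ≠ 0 := ne_of_gt hp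
    have hr' : r ≠ 0 := ne_of_gt hr
    rcases eq_or_lt_of_le hlam1 with hl1 | hl1
    · -- lam = 1 forces p = 1, so x = m₁ ∈ M, contradiction
      have hap : a / p = a := by
        by_contra hne
        have : a < a / p := lt_of_le_of_ne h1 (Ne.symm hne)
        have : b / r < b := by rw [hlam] at hl1; linarith
        linarith
      have hpe : p = 1 := by
        rw [div_eq_iff hp'] at hap
        have h5 : a * p = a * 1 := by linarith
        exact mul_left_cancel₀ (ne_of_gt ha0) h5
      have hq0 : q = 0 := by linarith
      have hxm : m₁ = x := by rw [hm₁, hpe, hq0]; simp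
      exact hxM (hxm ▸ hm₁M)
    · have hlampos : (0:ℝ) < lam - 1 := by linarith
      have hl' : lam - 1 ≠ 0 := ne_of_gt hlampos
      have hMmem : (a/(p*(lam-1))) • m₁ + (b/(r*(lam-1))) • m₂ +
          (-1/(lam-1)) • (a • x + b • y) ∈ (M : Set X) := by
        apply affine_comb3_mem M hm₁M hm₂M hzM
        have hb2 : b = 1 - a := by linarith
        have e : a/(p*(lam-1)) + b/(r*(lam-1)) + (-1/(lam-1)) =
            (a/p + b/r - 1)/(lam-1) := by
          field_simp
          ring
        have hkey : a/p + b/r - 1 = lam - 1 := by rw [hlam]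
        rw [e, hkey, div_self hl']
      have hSmem : (a/(p*(lam-1))) • m₁ + (b/(r*(lam-1))) • m₂ +
          (-1/(lam-1)) • (a • x + b • y) ∈ S := by
        have heq : (a/(p*(lam-1))) • m₁ + (b/(r*(lam-1))) • m₂ +
            (-1/(lam-1)) • (a • x + b • y) =
            (a*q/(p*(lam-1))) • s₁ + (b*w/(r*(lam-1))) • s₂ := by
          rw [hm₁, hm₂]
          match_scalars <;> field_simp <;> ring
        rw [heq]
        apply hconv hs₁ hs₂ (by positivity) (by positivity)
        have hb2 : b = 1 - a := by linarith
        have e : a*q/(p*(lam-1)) + b*w/(r*(lam-1)) = (a*q/p + b*w/r)/(lam-1) := by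
          field_simp
        have hkey : a*q/p + b*w/r = lam - 1 := by
          have hq' : q = 1 - p := by linarith
          have hw' : w = 1 - r := by linarith
          rw [hq', hw', hlam, hb2]
          field_simp
          ring
        rw [e, hkey, div_self hl']
      exact hdisj' _ hSmem hMmem
  exact ⟨hcompl, ⟨hconv, hcompl⟩, hunion, huc⟩
end

section
/- Let X be a real vector space, Q ⊆ X a convex set, and F a subset with ∅ ≠ F and F ≠ Q. Then F is a face of Q if and only if there exist a nonempty affine subspace M ⊆ X and a generalized semispace S generated by M such that Q ⊆ M ∪ S and F = M ∩ Q. -/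
section Affine

variable {𝕜 E : Type*} [Field 𝕜] [LinearOrder 𝕜] [IsStrictOrderedRing 𝕜]
  [AddCommGroup E] [Module 𝕜 E]

theorem AffineSubspace.right_mem_of_mem_openSegment (M : AffineSubspace 𝕜 E) {x y z : E}
    (hx : x ∈ M) (hz : z ∈ M) (hxyz : z ∈ openSegment 𝕜 x y) : y ∈ M := by
  rw [openSegment_eq_image_lineMap] at hxyz
  obtain ⟨t, ht, rfl⟩ := hxyz
  simpa [ht.1.ne'] using AffineMap.lineMap_mem t⁻¹ hx hz

theorem Convex.mem_or_exists_mem_openSegment_of_mem_affineSpan {F : Set E} (hF : Convex 𝕜 F)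
    {x : E} (hx : x ∈ affineSpan 𝕜 F) : x ∈ F ∨ ∃ a ∈ F, ∃ b ∈ F, a ∈ openSegment 𝕜 x b := by
  classical
  rw [← Subtype.range_coe (s := F)] at hx
  obtain ⟨s, w, hw, rfl⟩ := eq_affineCombination_of_mem_affineSpan hx
  rw [s.affineCombination_eq_linear_combination _ w hw]
  by_cases hnonneg : ∀ i ∈ s, 0 ≤ w i
  · exact .inl (hF.sum_mem hnonneg hw fun i _ => i.2)
  push Not at hnonneg
  obtain ⟨i₀, hi₀, hwi₀⟩ := hnonneg
  right
  set pos := s.filter (0 ≤ w ·)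
  set neg := s.filter (¬ 0 ≤ w ·)
  set N := ∑ i ∈ neg, -w i
  have hneg : ∀ i ∈ neg, 0 < -w i := fun i hi => by
    simpa using (Finset.mem_filter.1 hi).2
  have hN : 0 < N := Finset.sum_pos' (fun i hi => (hneg i hi).le)
    ⟨i₀, Finset.mem_filter.2 ⟨hi₀, hwi₀.not_ge⟩, by linarith⟩
  have hpos : ∑ i ∈ pos, w i = 1 + N := by
    have := Finset.sum_filter_add_sum_filter_not s (0 ≤ w ·) w
    simp only [N, Finset.sum_neg_distrib]
    linarith
  refine ⟨pos.centerMass w (↑), hF.centerMass_mem (fun i hi => (Finset.mem_filter.1 hi).2)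
    (by linarith) fun i _ => i.2, neg.centerMass (-w ·) (↑),
    hF.centerMass_mem (fun i hi => (hneg i hi).le) hN fun i _ => i.2, ?_⟩
  rw [mem_openSegment_iff_div]
  refine ⟨1, N, one_pos, hN, ?_⟩
  rw [Finset.centerMass, Finset.centerMass, hpos,
    ← Finset.sum_filter_add_sum_filter_not s (0 ≤ w ·)]
  change _ + _ • (N⁻¹ • _) = _
  simp only [neg_smul, Finset.sum_neg_distrib, smul_neg, smul_smul]
  match_scalars
  · field_simp
  · field_simp
    ring

theorem IsExtreme.affineSpan_inter_eq {A B : Set E} (hAB : IsExtreme 𝕜 A B) (hB : Convex 𝕜 B) :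
    (affineSpan 𝕜 B : Set E) ∩ A = B := by
  refine Set.Subset.antisymm (fun x ⟨hxB, hxA⟩ => ?_)
    fun x hx => ⟨subset_affineSpan 𝕜 B hx, hAB.subset hx⟩
  obtain hx | ⟨a, ha, b, hb, hab⟩ := hB.mem_or_exists_mem_openSegment_of_mem_affineSpan hxB
  · exact hx
  · exact hAB.left_mem_of_mem_openSegment hxA (hAB.subset hb) ha hab

theorem isExtreme_inter_of_subset_union {A S : Set E} {M : AffineSubspace 𝕜 E} (hS : Convex 𝕜 S)
    (hSM : S ∩ M = ∅) (hAMS : A ⊆ M ∪ S) : IsExtreme 𝕜 A (M ∩ A) := by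
  refine ⟨Set.inter_subset_right, fun x hxA y hyA z ⟨hzM, _⟩ hxyz => ⟨?_, hxA⟩⟩
  by_contra hxM
  have hyS : y ∈ S := (hAMS hyA).resolve_left
    fun hyM => hxM (M.right_mem_of_mem_openSegment hyM hzM (openSegment_symm 𝕜 x y ▸ hxyz))
  have hzS : z ∈ S := hS.openSegment_subset ((hAMS hxA).resolve_left hxM) hyS hxyz
  exact (Set.eq_empty_iff_forall_notMem.1 hSM) z ⟨hzS, hzM⟩

end Affine

section Real

variable {X : Type*} [AddCommGroup X] [Module ℝ X]

theorem isFace_iff_isExtreme {Q F : Set X} :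
    IsFace Q F ↔ F.Nonempty ∧ Convex ℝ F ∧ IsExtreme ℝ Q F := by
  refine ⟨fun ⟨hne, hconv, hsub, hface⟩ => ⟨hne, hconv, hsub, ?_⟩,
    fun ⟨hne, hconv, hext⟩ => ⟨hne, hconv, hext.subset, fun u v hu hv α hα hα1 h => ?_⟩⟩
  · rintro x hx y hy z hz ⟨a, b, ha, hb, hab, rfl⟩
    obtain rfl : b = 1 - a := by linarith
    exact (hface x y hx hy a ha (by linarith) hz).1
  · have huv : α • u + (1 - α) • v ∈ openSegment ℝ u v :=
      ⟨α, 1 - α, hα, by linarith, by ring, rfl⟩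
    exact ⟨hext.left_mem_of_mem_openSegment hu hv h huv,
      hext.right_mem_of_mem_openSegment hu hv h huv⟩

theorem isGenSemispace_iff_maximal {M S : Set X} :
    IsGenSemispace M S ↔ Maximal (fun C => Convex ℝ C ∧ C ∩ M = ∅) S :=
  ⟨fun ⟨hS, hSM, hmax⟩ => ⟨⟨hS, hSM⟩, fun C ⟨hC, hCM⟩ hSC => (hmax C hC hCM hSC).le⟩,
    fun h => ⟨h.prop.1, h.prop.2, fun _ hC hCM hSC => (h.eq_of_subset ⟨hC, hCM⟩ hSC).symm⟩⟩

theorem exists_isGenSemispace_superset (M : Set X) {C : Set X} (hC : Convex ℝ C)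
    (hCM : C ∩ M = ∅) : ∃ S, C ⊆ S ∧ IsGenSemispace M S := by
  simp_rw [isGenSemispace_iff_maximal, ← Set.disjoint_iff_inter_eq_empty] at hCM ⊢
  refine zorn_subset_nonempty {C | Convex ℝ C ∧ Disjoint C M}
    (fun c hc hchain _ => ⟨⋃₀ c, ⟨?_, ?_⟩, fun _ => Set.subset_sUnion_of_mem⟩) C ⟨hC, hCM⟩
  · exact hchain.directedOn.convex_sUnion fun _ hA => (hc hA).1
  · exact Set.disjoint_sUnion_left.2 fun _ hA => (hc hA).2

end Real

theorem face_iff_genSemispace_general {X : Type*} [AddCommGroup X] [Module ℝ X]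
    (Q F : Set X) (hQ : Convex ℝ Q) (hne : F.Nonempty) :
    IsFace Q F ↔
      ∃ (M : AffineSubspace ℝ X) (S : Set X), (M : Set X).Nonempty ∧
        IsGenSemispace (M : Set X) S ∧ Q ⊆ (M : Set X) ∪ S ∧ F = (M : Set X) ∩ Q := by
  rw [isFace_iff_isExtreme]
  constructor
  · rintro ⟨-, hF, hQF⟩
    have hMQ := hQF.affineSpan_inter_eq hF
    obtain ⟨S, hS, hSgen⟩ := exists_isGenSemispace_superset (affineSpan ℝ F : Set X)
      (hQF.convex_sdiff hQ) (by rw [Set.inter_comm, ← Set.inter_sdiff_assoc, hMQ, Set.sdiff_self])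
    refine ⟨affineSpan ℝ F, S, hne.mono (subset_affineSpan ℝ F), hSgen, fun x hx => ?_, hMQ.symm⟩
    by_cases hxF : x ∈ F
    · exact .inl (subset_affineSpan ℝ F hxF)
    · exact .inr (hS ⟨hx, hxF⟩)
  · rintro ⟨M, S, -, ⟨hS, hSM, -⟩, hQMS, rfl⟩
    exact ⟨hne, M.convex.inter hQ, isExtreme_inter_of_subset_union hS hSM hQMS⟩

theorem face_iff_genSemispace {X : Type*} [AddCommGroup X] [Module ℝ X]
    (Q F : Set X) (hQ : Convex ℝ Q) (hne : F.Nonempty) (hFQ : F ≠ Q) :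
    IsFace Q F ↔
      ∃ (M : AffineSubspace ℝ X) (S : Set X), (M : Set X).Nonempty ∧
        IsGenSemispace (M : Set X) S ∧ Q ⊆ (M : Set X) ∪ S ∧ F = (M : Set X) ∩ Q :=
  face_iff_genSemispace_general Q F hQ hne
end

section
/- Let X be a real vector space, Q ⊆ X a convex set, and F a subset with ∅ ≠ F and F ≠ Q. Then F is a face of Q if and only if there exists a compatible total preorder ⪯ on X such that F = Min(Q | ⪯) := {x ∈ Q : x ⪯ y for all y ∈ Q}. -/
/-- `r` is a total preorder on `X` compatible with the vector space operations:
reflexive, transitive, total, translation invariant and invariant under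
multiplication by positive scalars. -/
def IsCompatTotalPreorder {X : Type*} [AddCommGroup X] [Module ℝ X]
    (r : X → X → Prop) : Prop :=
  (∀ x, r x x) ∧ (∀ x y z, r x y → r y z → r x z) ∧
    (∀ x y, r x y ∨ r y x) ∧
    (∀ x y z, r x y → r (x + z) (y + z)) ∧
    (∀ (x y : X) (l : ℝ), 0 < l → r x y → r (l • x) (l • y))

/-!
A compatible total preorder `⪯` is the same as a pointed convex cone `P` with `P ∪ -P = X`, via
`x ⪯ y ↔ y - x ∈ P`, and `Min(Q | ⪯)` is then `{x ∈ Q | Q - x ⊆ P}`.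
Such a set is always a face: if `z ∈ Min(Q | ⪯)` lies strictly inside a segment `[u, v] ⊆ Q`, the
vectors `u - z` and `v - z` of `P` are negative multiples of each other, so `z - u ∈ P` too.
Conversely, for a face `F` the cones spanned by `Q - F` and by `F - (Q \ F)` are disjoint, and a
Zorn argument enlarges the first one, keeping it disjoint from the second, to a cone `P` with
`P ∪ -P = X`; its minimum set on `Q` is exactly `F`.
-/

open Set Pointwise

section Preorder

variable {X : Type*} [AddCommGroup X] [Module ℝ X]

lemma isCompatTotalPreorder_sub_mem {P : PointedCone ℝ X} (htot : ∀ x, x ∈ P ∨ -x ∈ P) :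
    IsCompatTotalPreorder fun x y => y - x ∈ P := by
  refine ⟨fun x => by simp, fun x y z hxy hyz => ?_, fun x y => ?_, fun x y z h => ?_,
    fun x y l hl h => ?_⟩
  · simpa only [sub_add_sub_cancel] using P.add_mem hyz hxy
  · simpa only [neg_sub] using htot (y - x)
  · simpa only [add_sub_add_right_eq_sub] using h
  · simpa only [← smul_sub] using P.smul_mem hl.le h

lemma IsCompatTotalPreorder.exists_pointedCone {r : X → X → Prop}
    (hr : IsCompatTotalPreorder r) : ∃ P : PointedCone ℝ X, ∀ x y, r x y ↔ y - x ∈ P := by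
  obtain ⟨hrefl, htrans, -, hadd, hsmul⟩ := hr
  have hsub : ∀ x y, r x y ↔ r 0 (y - x) := fun x y =>
    ⟨fun h => by simpa [sub_eq_add_neg] using hadd x y (-x) h,
      fun h => by simpa using hadd 0 (y - x) x h⟩
  refine ⟨{ carrier := {x | r 0 x}, add_mem' := ?_, zero_mem' := hrefl 0, smul_mem' := ?_ }, hsub⟩
  · intro x y hx hy
    exact htrans _ _ _ hy (by simpa using hadd 0 x y hx)
  · rintro ⟨c, hc⟩ x hx
    rcases hc.eq_or_lt with rfl | hc
    · simpa using hrefl 0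
    · simpa using hsmul 0 x c hc hx

end Preorder

section MinSet

variable {𝕜 E : Type*} [Field 𝕜] [LinearOrder 𝕜] [IsStrictOrderedRing 𝕜]
  [AddCommGroup E] [Module 𝕜 E]

lemma isExtreme_setOf_forall_sub_mem (P : PointedCone 𝕜 E) (Q : Set E) :
    IsExtreme 𝕜 Q {x ∈ Q | ∀ y ∈ Q, y - x ∈ P} := by
  refine ⟨fun x hx => hx.1,
    fun u hu v hv z ⟨_, hz⟩ ⟨a, b, ha, hb, hab, hzuv⟩ => ⟨hu, fun y hy => ?_⟩⟩
  have hratio : a • (z - u) = b • (v - z) := by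
    subst hzuv
    linear_combination (norm := module) hab • (a • u + b • v)
  have hzu : z - u ∈ P := (P.smul_mem_iff ha).1 (hratio ▸ P.smul_mem hb.le (hz v hv))
  simpa only [sub_add_sub_cancel] using P.add_mem (hz y hy) hzu

lemma convex_setOf_forall_sub_mem (P : PointedCone 𝕜 E) {Q : Set E} (hQ : Convex 𝕜 Q) :
    Convex 𝕜 {x ∈ Q | ∀ y ∈ Q, y - x ∈ P} := by
  rintro x ⟨hxQ, hx⟩ y ⟨hyQ, hy⟩ a b ha hb hab
  refine ⟨hQ hxQ hyQ ha hb hab, fun z hz => ?_⟩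
  have hcomb : z - (a • x + b • y) = a • (z - x) + b • (z - y) := by
    linear_combination (norm := module) hab • (-z)
  exact hcomb ▸ P.add_mem (P.smul_mem ha (hx z hz)) (P.smul_mem hb (hy z hz))

end MinSet

section Extension

variable {𝕜 E : Type*} [CommRing 𝕜] [LinearOrder 𝕜] [IsStrictOrderedRing 𝕜]
  [AddCommGroup E] [Module 𝕜 E] {T : ConvexCone 𝕜 E}

lemma PointedCone.exists_add_smul_mem_of_maximal {M : PointedCone 𝕜 E}
    (hM : Maximal (fun C : PointedCone 𝕜 E => Disjoint (C : Set E) T) M) {x : E} (hx : x ∉ M) :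
    ∃ m ∈ M, ∃ a : 𝕜, 0 < a ∧ m + a • x ∈ T := by
  have hlt : M < M ⊔ Submodule.span _ {x} :=
    SetLike.lt_iff_le_and_exists.2
      ⟨le_sup_left, x, Submodule.mem_sup_right (Submodule.mem_span_singleton_self x), hx⟩
  obtain ⟨z, hzM, hzT⟩ := not_disjoint_iff.1 (hM.not_prop_of_gt hlt)
  obtain ⟨m, hm, w, hw, rfl⟩ := Submodule.mem_sup.1 hzM
  obtain ⟨⟨a, ha⟩, rfl⟩ := Submodule.mem_span_singleton.1 hw
  rw [Nonneg.mk_smul] at hzT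
  rcases ha.eq_or_lt with rfl | ha
  · rw [zero_smul, add_zero] at hzT
    exact absurd hzT (disjoint_left.1 hM.prop hm)
  · exact ⟨m, hm, a, ha, hzT⟩

theorem PointedCone.exists_le_forall_mem_or_neg_mem (P : PointedCone 𝕜 E)
    (hPT : Disjoint (P : Set E) T) :
    ∃ P' : PointedCone 𝕜 E, P ≤ P' ∧ Disjoint (P' : Set E) T ∧ ∀ x, x ∈ P' ∨ -x ∈ P' := by
  obtain ⟨M, hPM, hM⟩ := zorn_le_nonempty₀ {C : PointedCone 𝕜 E | Disjoint (C : Set E) T}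
    (fun c hcs hchain C hC => ⟨sSup c, disjoint_left.2 fun x hx => by
      obtain ⟨D, hD, hxD⟩ := (Submodule.mem_sSup_of_directed ⟨C, hC⟩ hchain.directedOn).1 hx
      exact disjoint_left.1 (hcs hD) hxD, fun _ => le_sSup⟩) P hPT
  refine ⟨M, hPM, hM.prop, fun x => ?_⟩
  by_contra! ⟨hx, hnx⟩
  obtain ⟨m, hm, a, ha, hmT⟩ := exists_add_smul_mem_of_maximal hM hx
  obtain ⟨m', hm', b, hb, hm'T⟩ := exists_add_smul_mem_of_maximal hM hnx
  have hsum : b • (m + a • x) + a • (m' + b • -x) = b • m + a • m' := by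
    rw [smul_add, smul_add, smul_smul, smul_smul, mul_comm, smul_neg]; abel
  have hT : b • m + a • m' ∈ T := hsum ▸ T.add_mem (T.smul_mem hb hmT) (T.smul_mem ha hm'T)
  exact disjoint_left.1 hM.prop (M.add_mem (M.smul_mem hb.le hm) (M.smul_mem ha.le hm')) hT

end Extension

section Faces

variable {X : Type*} [AddCommGroup X] [Module ℝ X] {Q F : Set X}

lemma IsFace.isExtreme (hF : IsFace Q F) : IsExtreme ℝ Q F := by
  refine ⟨hF.2.2.1, fun u hu v hv z hz ⟨a, b, ha, hb, hab, hzuv⟩ => ?_⟩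
  obtain rfl : b = 1 - a := by linarith
  exact (hF.2.2.2 u v hu hv a ha (by linarith) (hzuv ▸ hz)).1

lemma isFace_of_isExtreme (hne : F.Nonempty) (hconv : Convex ℝ F) (hext : IsExtreme ℝ Q F) :
    IsFace Q F := by
  refine ⟨hne, hconv, hext.subset, fun u v hu hv α h0 h1 hz => ?_⟩
  have hseg : α • u + (1 - α) • v ∈ openSegment ℝ u v :=
    ⟨α, 1 - α, h0, by linarith, by ring, rfl⟩
  exact ⟨hext.left_mem_of_mem_openSegment hu hv hz hseg,
    hext.right_mem_of_mem_openSegment hu hv hz hseg⟩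

lemma IsFace.mem_of_smul_sub_eq_sub (hF : IsFace Q F) {q q' f f' : X} (hq : q ∈ Q)
    (hq' : q' ∈ Q) (hf : f ∈ F) (hf' : f' ∈ F) {r : ℝ} (hr : 0 < r)
    (h : r • (f' - q') = q - f) : q' ∈ F := by
  have hseg : (1 / (1 + r)) • f + (r / (1 + r)) • f' ∈ openSegment ℝ q q' := by
    rw [mem_openSegment_iff_div]
    refine ⟨1, r, one_pos, hr, ?_⟩
    linear_combination (norm := module) (-1 / (1 + r)) • h
  exact hF.isExtreme.right_mem_of_mem_openSegment hq hq'
    (hF.2.1.openSegment_subset hf hf' ((mem_openSegment_iff_div).2 ⟨1, r, one_pos, hr, rfl⟩)) hseg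

lemma IsFace.exists_pointedCone (hQ : Convex ℝ Q) (hF : IsFace Q F) :
    ∃ P : PointedCone ℝ X, (∀ x, x ∈ P ∨ -x ∈ P) ∧ F = {x ∈ Q | ∀ y ∈ Q, y - x ∈ P} := by
  obtain ⟨f₀, hf₀⟩ := hF.1
  have hFQ : F ⊆ Q := hF.2.2.1
  have hA : Convex ℝ (Q - F) := hQ.sub hF.2.1
  have hB : Convex ℝ (F - Q \ F) := hF.2.1.sub (hF.isExtreme.convex_sdiff hQ)
  have hdisj : Disjoint (ConvexCone.hull ℝ (Q - F)) (ConvexCone.hull ℝ (F - Q \ F)) := by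
    rw [ConvexCone.disjoint_hull_left_of_convex hA, disjoint_left]
    rintro _ ⟨q, hq, f, hf, rfl⟩ hT
    obtain ⟨r, hr, _, ⟨f', hf', q', ⟨hq', hq'F⟩, rfl⟩, h⟩ :=
      (ConvexCone.mem_hull_of_convex hB).1 hT
    exact hq'F (hF.mem_of_smul_sub_eq_sub hq hq' hf hf' hr h)
  have hpointed : (ConvexCone.hull ℝ (Q - F)).Pointed :=
    ConvexCone.subset_hull ⟨f₀, hFQ hf₀, f₀, hf₀, sub_self f₀⟩
  obtain ⟨P, hP₀P, hPT, htot⟩ :=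
    ((ConvexCone.hull ℝ (Q - F)).toPointedCone hpointed).exists_le_forall_mem_or_neg_mem
      (ConvexCone.disjoint_coe.2 hdisj)
  refine ⟨P, htot, Set.ext fun x => ⟨fun hx => ⟨hFQ hx, fun y hy => ?_⟩, fun ⟨hxQ, hx⟩ => ?_⟩⟩
  · exact hP₀P (ConvexCone.subset_hull (sub_mem_sub hy hx))
  · by_contra hxF
    exact disjoint_left.1 hPT (hx f₀ (hFQ hf₀))
      (ConvexCone.subset_hull (sub_mem_sub hf₀ ⟨hxQ, hxF⟩))

end Faces

theorem face_iff_compatTotalPreorder_general {X : Type*} [AddCommGroup X] [Module ℝ X]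
    (Q F : Set X) (hQ : Convex ℝ Q) (hne : F.Nonempty) :
    IsFace Q F ↔
      ∃ r : X → X → Prop, IsCompatTotalPreorder r ∧
        F = {x ∈ Q | ∀ y ∈ Q, r x y} := by
  constructor
  · intro hF
    obtain ⟨P, htot, hFP⟩ := hF.exists_pointedCone hQ
    exact ⟨_, isCompatTotalPreorder_sub_mem htot, hFP⟩
  · rintro ⟨r, hr, rfl⟩
    obtain ⟨P, hP⟩ := hr.exists_pointedCone
    simp only [hP] at hne ⊢
    exact isFace_of_isExtreme hne (convex_setOf_forall_sub_mem P hQ)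
      (isExtreme_setOf_forall_sub_mem P Q)

theorem face_iff_compatTotalPreorder {X : Type*} [AddCommGroup X] [Module ℝ X]
    (Q F : Set X) (hQ : Convex ℝ Q) (hne : F.Nonempty) (hFQ : F ≠ Q) :
    IsFace Q F ↔
      ∃ r : X → X → Prop, IsCompatTotalPreorder r ∧
        F = {x ∈ Q | ∀ y ∈ Q, r x y} :=
  face_iff_compatTotalPreorder_general Q F hQ hne
end

section
/- Let X be a real vector space, M ⊆ X a nonempty affine subspace with M ≠ X, and S a generalized semispace generated by M. Define the relation ⪯_S on X by x ⪯_S y ⟺ y − x ∈ 0⁺S, where 0⁺S := {y ∈ X : x + ty ∈ S for all x ∈ S and all t > 0} is the recession cone of S. Then ⪯_S is a compatible total preorder on X; y ≺_S x (i.e. y ⪯_S x but not x ⪯_S y) for every x ∈ S and every y ∈ X \ S; for every a ∈ M one has M ∪ S = a + 0⁺S; and M = Min(M ∪ S | ⪯_S) := {x ∈ M ∪ S : x ⪯_S y for all y ∈ M ∪ S}. -/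
open Set Pointwise

section

variable {X : Type*} [AddCommGroup X] [Module ℝ X]

def recessionCone (S : Set X) : ConvexCone ℝ X where
  carrier := {y | ∀ x ∈ S, ∀ t : ℝ, 0 < t → x + t • y ∈ S}
  smul_mem' c hc y hy x hx t ht := by
    simpa only [smul_smul] using hy x hx (t * c) (by positivity)
  add_mem' y hy z hz x hx t ht := by
    simpa only [smul_add, add_assoc] using hz _ (hy x hx t ht) t ht

theorem pointed_recessionCone (S : Set X) : (recessionCone S).Pointed :=
  fun x hx t _ => by simpa using hx

theorem mem_of_sub_mem_recessionCone {S : Set X} {x y : X} (hx : x ∈ S)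
    (h : y - x ∈ recessionCone S) : y ∈ S := by
  simpa using h x hx 1 one_pos

theorem ConvexCone.isCompatTotalPreorder (K : ConvexCone ℝ X) (h0 : K.Pointed)
    (htot : ∀ u, u ∈ K ∨ -u ∈ K) : IsCompatTotalPreorder fun x y => y - x ∈ K := by
  refine ⟨fun x => by simp only [sub_self]; exact h0, fun x y z hxy hyz => ?_, fun x y => ?_,
    fun x y z h => ?_, fun x y l hl h => ?_⟩
  · simpa using K.add_mem hyz hxy
  · exact (htot (y - x)).imp id fun h => by simpa using h
  · simpa using h
  · simpa [smul_sub] using K.smul_mem hl h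

namespace IsGenSemispace

section

variable {M S : Set X}

theorem notMem_of_mem (hS : IsGenSemispace M S) {x : X} (hx : x ∈ S) : x ∉ M :=
  fun hxM => (hS.2.1 ▸ ⟨hx, hxM⟩ : x ∈ (∅ : Set X))

theorem nonempty (hS : IsGenSemispace M S) {z : X} (hz : z ∉ M) : S.Nonempty := by
  rw [nonempty_iff_ne_empty]
  rintro rfl
  exact singleton_ne_empty z <|
    hS.2.2 {z} (convex_singleton z) (singleton_inter_eq_empty.2 hz) (empty_subset _)

theorem mem_recessionCone (hS : IsGenSemispace M S) {d : X}
    (hd : ∀ s ∈ S, ∀ t : ℝ, 0 ≤ t → s + t • d ∉ M) : d ∈ recessionCone S := by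
  obtain ⟨hconv, -, hmax⟩ := hS
  have hray : S + LinearMap.toSpanSingleton ℝ X d '' Ici 0 = S := by
    refine hmax _ (hconv.add ((convex_Ici 0).linear_image _)) ?_ fun s hs => ?_
    · rw [eq_empty_iff_forall_notMem]
      rintro _ ⟨⟨s, hs, _, ⟨t, ht, rfl⟩, rfl⟩, hM⟩
      exact hd s hs t ht hM
    · simpa using add_mem_add hs
        (mem_image_of_mem (LinearMap.toSpanSingleton ℝ X d) (self_mem_Ici : (0 : ℝ) ∈ Ici 0))
  intro s hs t ht
  rw [← hray]
  exact add_mem_add hs ⟨t, ht.le, rfl⟩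

theorem exists_eq_add_smul_sub (hS : IsGenSemispace M S) {z : X} (hz : z ∉ M ∪ S) :
    ∃ m ∈ M, ∃ s ∈ S, ∃ l : ℝ, 0 < l ∧ z = m + l • (m - s) := by
  rw [mem_union, not_or] at hz
  obtain ⟨hzM, hzS⟩ := hz
  have hSne := hS.nonempty hzM
  have hmeet : (convexJoin ℝ {z} S ∩ M).Nonempty := by
    rw [nonempty_iff_ne_empty]
    intro h
    have hjoin := hS.2.2 _ ((convex_singleton z).convexJoin hS.1) h
      (subset_convexJoin_right (singleton_nonempty z))
    exact hzS (hjoin ▸ subset_convexJoin_left hSne (mem_singleton z))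
  obtain ⟨p, hp, hpM⟩ := hmeet
  obtain ⟨_, rfl, s, hs, u, v, hu, hv, huv, rfl⟩ := mem_convexJoin.1 hp
  have hu0 : u ≠ 0 := by
    rintro rfl
    obtain rfl : v = 1 := by linarith
    exact hS.notMem_of_mem hs (by simpa using hpM)
  have hv0 : v ≠ 0 := by
    rintro rfl
    obtain rfl : u = 1 := by linarith
    exact hzM (by simpa using hpM)
  obtain rfl : u = 1 - v := by linarith
  refine ⟨_, hpM, s, hs, v / (1 - v), by positivity, ?_⟩
  match_scalars <;> field_simp <;> ring

end

variable {M : AffineSubspace ℝ X} {S : Set X}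

theorem sub_mem_recessionCone (hS : IsGenSemispace (M : Set X) S) {m x : X} (hm : m ∈ M)
    (hx : x ∈ (M : Set X) ∪ S) : x - m ∈ recessionCone S := by
  refine hS.mem_recessionCone fun s hs t ht hz => ?_
  rcases hx with hxM | hxS
  · have h := M.smul_vsub_vadd_mem t hm hxM hz
    rw [vsub_eq_sub, vadd_eq_add, show t • (m - x) + (s + t • (x - m)) = s by module] at h
    exact hS.notMem_of_mem hs h
  · -- `(s + t • x) / (1 + t) ∈ S` is also `(z + t • m) / (1 + t) ∈ M`, where `z = s + t • (x - m)`
    have h1t : 0 < 1 + t := by linarith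
    have hab : 1 / (1 + t) + t / (1 + t) = 1 := by field_simp
    have h := M.convex hz hm (by positivity) (by positivity) hab
    rw [show (1 / (1 + t)) • (s + t • (x - m)) + (t / (1 + t)) • m
        = (1 / (1 + t)) • s + (t / (1 + t)) • x by module] at h
    exact hS.notMem_of_mem (hS.1 hs hxS (by positivity) (by positivity) hab) h

theorem sub_mem_recessionCone_of_notMem (hS : IsGenSemispace (M : Set X) S) {x y : X}
    (hx : x ∈ (M : Set X) ∪ S) (hy : y ∉ S) : x - y ∈ recessionCone S := by
  by_cases hyM : y ∈ M
  · exact hS.sub_mem_recessionCone hyM hx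
  obtain ⟨m, hm, s, hs, l, hl, rfl⟩ :=
    hS.exists_eq_add_smul_sub (by simp [hyM, hy] : y ∉ (M : Set X) ∪ S)
  have key := (recessionCone S).add_mem (hS.sub_mem_recessionCone hm hx)
    ((recessionCone S).smul_mem hl (hS.sub_mem_recessionCone hm (Or.inr hs)))
  convert key using 1
  module

theorem mem_union_iff_sub_mem_recessionCone (hS : IsGenSemispace (M : Set X) S) {a z : X}
    (ha : a ∈ M) : z ∈ (M : Set X) ∪ S ↔ z - a ∈ recessionCone S := by
  refine ⟨hS.sub_mem_recessionCone ha, fun hz => by_contra fun hzMS => ?_⟩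
  obtain ⟨m, hm, s, hs, l, hl, rfl⟩ := hS.exists_eq_add_smul_sub hzMS
  have heq : (1 / l) • (m - a) + m = s + (1 / l) • (m + l • (m - s) - a) := by
    match_scalars <;> field_simp
    ring
  have h := M.smul_vsub_vadd_mem (1 / l) hm ha hm
  rw [vsub_eq_sub, vadd_eq_add, heq] at h
  exact hS.notMem_of_mem (hz s hs (1 / l) (by positivity)) h

theorem mem_or_neg_mem_recessionCone (hS : IsGenSemispace (M : Set X) S)
    (hM : (M : Set X).Nonempty) (u : X) : u ∈ recessionCone S ∨ -u ∈ recessionCone S := by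
  obtain ⟨a, ha⟩ := hM
  by_cases hu : a + u ∈ S
  · left
    simpa using hS.sub_mem_recessionCone ha (Or.inr hu)
  · right
    simpa using hS.sub_mem_recessionCone_of_notMem (Or.inl ha) hu

end IsGenSemispace

end

theorem genSemispace_preorder_general {X : Type*} [AddCommGroup X] [Module ℝ X]
    (M : AffineSubspace ℝ X) (hM : (M : Set X).Nonempty)
    (S : Set X) (hS : IsGenSemispace (M : Set X) S)
    -- `C` is the recession cone `0⁺S` of `S`
    (C : Set X) (hC : C = {y : X | ∀ x ∈ S, ∀ t : ℝ, 0 < t → x + t • y ∈ S})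
    (r : X → X → Prop) (hr : ∀ x y, r x y ↔ y - x ∈ C) :
    IsCompatTotalPreorder r ∧
      (∀ x ∈ S, ∀ y ∉ S, r y x ∧ ¬ r x y) ∧
      (∀ a ∈ (M : Set X), (M : Set X) ∪ S = {z : X | ∃ w ∈ C, z = a + w}) ∧
      (M : Set X) = {x ∈ (M : Set X) ∪ S | ∀ y ∈ (M : Set X) ∪ S, r x y} := by
  obtain rfl : C = recessionCone S := hC
  obtain rfl : r = fun x y => y - x ∈ recessionCone S := by
    ext x y
    exact hr x y
  refine ⟨(recessionCone S).isCompatTotalPreorder (pointed_recessionCone S)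
      (hS.mem_or_neg_mem_recessionCone hM),
    fun x hx y hy => ⟨hS.sub_mem_recessionCone_of_notMem (Or.inr hx) hy,
      fun h => hy (mem_of_sub_mem_recessionCone hx h)⟩,
    fun a ha => ?_, ?_⟩
  · ext z
    rw [hS.mem_union_iff_sub_mem_recessionCone ha]
    exact ⟨fun h => ⟨z - a, h, by abel⟩, by rintro ⟨w, hw, rfl⟩; simpa using hw⟩
  · ext x
    refine ⟨fun hx => ⟨Or.inl hx, fun y => hS.sub_mem_recessionCone hx⟩, ?_⟩
    rintro ⟨hx, hmin⟩
    refine hx.resolve_right fun hxS => ?_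
    obtain ⟨a, ha⟩ := hM
    exact hS.notMem_of_mem (mem_of_sub_mem_recessionCone hxS (hmin a (Or.inl ha))) ha

theorem genSemispace_preorder {X : Type*} [AddCommGroup X] [Module ℝ X]
    (M : AffineSubspace ℝ X) (hM : (M : Set X).Nonempty) (hMX : (M : Set X) ≠ Set.univ)
    (S : Set X) (hS : IsGenSemispace (M : Set X) S)
    -- `C` is the recession cone `0⁺S` of `S`
    (C : Set X) (hC : C = {y : X | ∀ x ∈ S, ∀ t : ℝ, 0 < t → x + t • y ∈ S})
    (r : X → X → Prop) (hr : ∀ x y, r x y ↔ y - x ∈ C) :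
    IsCompatTotalPreorder r ∧
      (∀ x ∈ S, ∀ y ∉ S, r y x ∧ ¬ r x y) ∧
      (∀ a ∈ (M : Set X), (M : Set X) ∪ S = {z : X | ∃ w ∈ C, z = a + w}) ∧
      (M : Set X) = {x ∈ (M : Set X) ∪ S | ∀ y ∈ (M : Set X) ∪ S, r x y} :=
  genSemispace_preorder_general M hM S hS C hC r hr
end

section
/- Let X be a real vector space, Q ⊆ X a convex set, and F a proper face of Q. Then F is lexicographically exposed if and only if there exist m ≥ 1 and affine functions f_1, …, f_m : X → ℝ, each with nonzero linear part, such that the associated step-affine function of finite rank u (defined by u(x) = f_i(x) for the least index i with f_i(x) ≠ 0, and u(x) = 0 when f_i(x) = 0 for all i) satisfies u(x) ≥ 0 for all x ∈ Q and F = {x ∈ Q : u(x) = 0}. -/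
/-- `F` is a lexicographically exposed face of `Q`: there is a finite ordered family
`l 1, …, l m` (`m ≥ 1`) of nonzero linear functions such that, setting `G 0 = Q` and
`G i = {x ∈ G (i-1) | l i x = min over G (i-1) of l i}` for `1 ≤ i ≤ m`, one has `F = G m`. -/
def IsLexExposed {X : Type*} [AddCommGroup X] [Module ℝ X] (Q F : Set X) : Prop :=
  ∃ (m : ℕ) (l : ℕ → (X →ₗ[ℝ] ℝ)) (G : ℕ → Set X),
    1 ≤ m ∧ (∀ i : ℕ, 1 ≤ i → i ≤ m → l i ≠ 0) ∧
      G 0 = Q ∧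
      (∀ i : ℕ, 1 ≤ i → i ≤ m →
        G i = {x ∈ G (i - 1) | ∀ y ∈ G (i - 1), l i x ≤ l i y}) ∧
      F = G m

/-- The affine map `x ↦ l x - c`. -/
noncomputable def affOfLin {X : Type*} [AddCommGroup X] [Module ℝ X] (l : X →ₗ[ℝ] ℝ) (c : ℝ) :
    X →ᵃ[ℝ] ℝ where
  toFun := fun x => l x - c
  linear := l
  map_vadd' := by
    intro p v
    simp only [vadd_eq_add, map_add]
    ring

@[simp] lemma affOfLin_apply {X : Type*} [AddCommGroup X] [Module ℝ X]
    (l : X →ₗ[ℝ] ℝ) (c : ℝ) (x : X) : affOfLin l c x = l x - c := rfl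

@[simp] lemma affOfLin_linear {X : Type*} [AddCommGroup X] [Module ℝ X]
    (l : X →ₗ[ℝ] ℝ) (c : ℝ) : (affOfLin l c).linear = l := rfl

theorem lexExposed_iff_finiteRank_stepAffine {X : Type*} [AddCommGroup X] [Module ℝ X]
    (Q F : Set X) (hQ : Convex ℝ Q) (hF : IsFace Q F) (hFQ : F ≠ Q) :
    IsLexExposed Q F ↔
      ∃ (m : ℕ) (f : ℕ → (X →ᵃ[ℝ] ℝ)) (u : X → ℝ),
        1 ≤ m ∧ (∀ i : ℕ, 1 ≤ i → i ≤ m → (f i).linear ≠ 0) ∧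
          -- `u` is the step-affine function of finite rank associated to `f 1, …, f m`
          (∀ x : X, (∀ i : ℕ, 1 ≤ i → i ≤ m → f i x = 0) → u x = 0) ∧
          (∀ (x : X) (i : ℕ), 1 ≤ i → i ≤ m → f i x ≠ 0 →
            (∀ j : ℕ, 1 ≤ j → j < i → f j x = 0) → u x = f i x) ∧
          (∀ x ∈ Q, 0 ≤ u x) ∧ F = {x ∈ Q | u x = 0} := by
  classical
  obtain ⟨xs, hxsF⟩ := hF.1
  have hFsubQ : F ⊆ Q := hF.2.2.1
  constructor
  · -- forward direction
    rintro ⟨m, l, G, hm, hl, hG0, hGrec, hFG⟩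
    -- chain: G i ⊆ G (i-1)
    have hstep : ∀ i : ℕ, 1 ≤ i → i ≤ m → G i ⊆ G (i - 1) := by
      intro i h1 h2 x hx
      rw [hGrec i h1 h2] at hx
      exact hx.1
    -- G m ⊆ G i for i ≤ m
    have hchain : ∀ k : ℕ, k ≤ m → G m ⊆ G (m - k) := by
      intro k
      induction k with
      | zero => intro _; simp
      | succ n ih =>
        intro hk x hx
        have h1 : 1 ≤ m - n := by omega
        have h2 : m - n ≤ m := by omega
        have : x ∈ G (m - n) := ih (by omega) hx
        have := hstep (m - n) h1 h2 this
        have heq : m - n - 1 = m - (n + 1) := by omega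
        rwa [heq] at this
    have hGmsub : ∀ i : ℕ, i ≤ m → G m ⊆ G i := by
      intro i hi
      have := hchain (m - i) (by omega)
      have heq : m - (m - i) = i := by omega
      rwa [heq] at this
    -- xs ∈ G i for all i ≤ m
    have hxsG : ∀ i : ℕ, i ≤ m → xs ∈ G i := fun i hi =>
      hGmsub i hi (hFG ▸ hxsF)
    -- the affine functions
    set f : ℕ → (X →ᵃ[ℝ] ℝ) := fun i => affOfLin (l i) (l i xs) with hf
    -- membership lemma: if f j x = 0 for all 1 ≤ j ≤ i then x ∈ G i
    have memG : ∀ i : ℕ, i ≤ m → ∀ x, x ∈ Q →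
        (∀ j : ℕ, 1 ≤ j → j ≤ i → f j x = 0) → x ∈ G i := by
      intro i
      induction i with
      | zero => intro _ x hx _; rwa [hG0]
      | succ n ih =>
        intro hn x hx hz
        have hxn : x ∈ G n := ih (by omega) x hx (fun j h1 h2 => hz j h1 (by omega))
        have hxsn1 : xs ∈ G (n + 1) := hxsG (n + 1) hn
        rw [hGrec (n + 1) (by omega) hn] at hxsn1 ⊢
        simp only [Nat.add_sub_cancel] at hxsn1 ⊢
        refine ⟨hxn, fun y hy => ?_⟩
        have h0 : f (n + 1) x = 0 := hz (n + 1) (by omega) le_rfl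
        simp only [hf, affOfLin_apply, sub_eq_zero] at h0
        rw [h0]
        exact hxsn1.2 y hy
    -- points of F kill all f i
    have hFzero : ∀ x ∈ F, ∀ i : ℕ, 1 ≤ i → i ≤ m → f i x = 0 := by
      intro x hx i h1 h2
      have hxGi : x ∈ G i := hGmsub i h2 (hFG ▸ hx)
      have hxsGi : xs ∈ G i := hxsG i h2
      rw [hGrec i h1 h2] at hxGi hxsGi
      have := le_antisymm (hxGi.2 xs hxsGi.1) (hxsGi.2 x hxGi.1)
      simp only [hf, affOfLin_apply, this, sub_self]
    -- the step function
    set u : X → ℝ := fun x =>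
      if h : ∃ i, 1 ≤ i ∧ i ≤ m ∧ f i x ≠ 0 then f (Nat.find h) x else 0 with hu
    have u_zero : ∀ x : X, (∀ i : ℕ, 1 ≤ i → i ≤ m → f i x = 0) → u x = 0 := by
      intro x hx
      rw [hu]
      beta_reduce
      rw [dif_neg]
      rintro ⟨i, h1, h2, h3⟩
      exact h3 (hx i h1 h2)
    have u_step : ∀ (x : X) (i : ℕ), 1 ≤ i → i ≤ m → f i x ≠ 0 →
        (∀ j : ℕ, 1 ≤ j → j < i → f j x = 0) → u x = f i x := by
      intro x i h1 h2 h3 h4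
      have hex : ∃ i, 1 ≤ i ∧ i ≤ m ∧ f i x ≠ 0 := ⟨i, h1, h2, h3⟩
      rw [hu]
      beta_reduce
      rw [dif_pos hex]
      have hfind : Nat.find hex = i := by
        rw [Nat.find_eq_iff]
        exact ⟨⟨h1, h2, h3⟩, fun j hj => by
          rintro ⟨hj1, hj2, hj3⟩
          exact hj3 (h4 j hj1 hj)⟩
      rw [hfind]
    have u_nonneg : ∀ x ∈ Q, 0 ≤ u x := by
      intro x hx
      rw [hu]
      beta_reduce
      split_ifs with h
      · set i := Nat.find h with hi
        obtain ⟨hi1, hi2, hi3⟩ := Nat.find_spec h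
        have hz : ∀ j : ℕ, 1 ≤ j → j ≤ i - 1 → f j x = 0 := by
          intro j hj1 hj2
          by_contra hc
          exact Nat.find_min h (show j < i by omega) ⟨hj1, by omega, hc⟩
        have hxGi : x ∈ G (i - 1) := memG (i - 1) (by omega) x hx hz
        have hxsGi : xs ∈ G i := hxsG i hi2
        rw [hGrec i hi1 hi2] at hxsGi
        have := hxsGi.2 x hxGi
        simp only [hf, affOfLin_apply]
        linarith
      · exact le_rfl
    refine ⟨m, f, u, hm, ?_, u_zero, u_step, u_nonneg, ?_⟩
    · intro i h1 h2
      simp only [hf, affOfLin_linear]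
      exact hl i h1 h2
    · ext x
      simp only [Set.mem_setOf_eq]
      constructor
      · intro hx
        exact ⟨hFsubQ hx, u_zero x (hFzero x hx)⟩
      · rintro ⟨hxQ, hux⟩
        have hz : ∀ i : ℕ, 1 ≤ i → i ≤ m → f i x = 0 := by
          intro i h1 h2
          by_contra hc
          have hex : ∃ i, 1 ≤ i ∧ i ≤ m ∧ f i x ≠ 0 := ⟨i, h1, h2, hc⟩
          have := Nat.find_spec hex
          rw [hu] at hux
          beta_reduce at hux
          rw [dif_pos hex] at hux
          exact this.2.2 hux
        rw [hFG]
        exact memG m le_rfl x hxQ hz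
  · -- backward direction
    rintro ⟨m, f, u, hm, hlin, hu0, hustep, hupos, hFu⟩
    -- f vanishes on F
    have hFzero : ∀ x ∈ F, ∀ i : ℕ, 1 ≤ i → i ≤ m → f i x = 0 := by
      intro x hx i h1 h2
      by_contra hc
      have hex : ∃ j, 1 ≤ j ∧ j ≤ m ∧ f j x ≠ 0 := ⟨i, h1, h2, hc⟩
      set k := Nat.find hex with hk
      obtain ⟨hk1, hk2, hk3⟩ := Nat.find_spec hex
      have hz : ∀ j : ℕ, 1 ≤ j → j < k → f j x = 0 := by
        intro j hj1 hj2
        by_contra hcc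
        exact Nat.find_min hex hj2 ⟨hj1, by omega, hcc⟩
      have hux : u x = f k x := hustep x k hk1 hk2 hk3 hz
      have : u x = 0 := by
        have := hFu ▸ hx
        exact this.2
      rw [this] at hux
      exact hk3 hux.symm
    -- claims about nonnegativity on partial zero sets
    have claimC : ∀ (i : ℕ), 1 ≤ i → i ≤ m → ∀ x ∈ Q,
        (∀ j : ℕ, 1 ≤ j → j < i → f j x = 0) → 0 ≤ f i x := by
      intro i h1 h2 x hxQ hz
      rcases eq_or_ne (f i x) 0 with h | h
      · rw [h]
      · have := hustep x i h1 h2 h hz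
        have := hupos x hxQ
        linarith [hustep x i h1 h2 h hz]
    set G : ℕ → Set X :=
      fun i => {x ∈ Q | ∀ j : ℕ, 1 ≤ j → j ≤ i → j ≤ m → f j x = 0} with hG
    have key : ∀ (i : ℕ) (a b : X), (f i).linear a - (f i).linear b = f i a - f i b := by
      intro i a b
      have := (f i).linearMap_vsub a b
      simpa [map_sub] using this
    have hxsQ : xs ∈ Q := hFsubQ hxsF
    have hxsG : ∀ i : ℕ, xs ∈ G i := by
      intro i
      exact ⟨hxsQ, fun j hj1 _ hj2 => hFzero xs hxsF j hj1 hj2⟩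
    refine ⟨m, fun i => (f i).linear, G, hm, hlin, ?_, ?_, ?_⟩
    · -- G 0 = Q
      ext x
      simp only [hG, Set.mem_setOf_eq]
      constructor
      · exact fun h => h.1
      · exact fun h => ⟨h, fun j hj1 hj2 _ => by omega⟩
    · -- recursion
      intro i h1 h2
      ext x
      simp only [hG, Set.mem_setOf_eq]
      constructor
      · rintro ⟨hxQ, hz⟩
        refine ⟨⟨hxQ, fun j hj1 hj2 hj3 => hz j hj1 (by omega) hj3⟩, ?_⟩
        rintro y ⟨hyQ, hy⟩
        have hfx : f i x = 0 := hz i h1 le_rfl h2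
        have hfy : 0 ≤ f i y :=
          claimC i h1 h2 y hyQ (fun j hj1 hj2 => hy j hj1 (by omega) (by omega))
        have := key i x y
        linarith
      · rintro ⟨⟨hxQ, hz⟩, hmin⟩
        refine ⟨hxQ, fun j hj1 hj2 hj3 => ?_⟩
        rcases lt_or_eq_of_le hj2 with hji | hji
        · exact hz j hj1 (by omega) hj3
        · subst hji
          have h0 : 0 ≤ f j x :=
            claimC j hj1 hj3 x hxQ (fun k hk1 hk2 => hz k hk1 (by omega) (by omega))
        
          have hxsG' : xs ∈ G (j - 1) := hxsG (j - 1)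
          have hle := hmin xs ⟨hxsQ, fun k hk1 hk2 hk3 => hFzero xs hxsF k hk1 hk3⟩
          have hfxs : f j xs = 0 := hFzero xs hxsF j hj1 hj3
          have := key j x xs
          linarith
    · -- F = G m
      ext x
      simp only [hG, Set.mem_setOf_eq]
      constructor
      · intro hx
        exact ⟨hFsubQ hx, fun j hj1 _ hj3 => hFzero x hx j hj1 hj3⟩
      · rintro ⟨hxQ, hz⟩
        have : u x = 0 := hu0 x (fun i hi1 hi2 => hz i hi1 hi2 hi2)
        rw [hFu]
        exact ⟨hxQ, this⟩
end
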